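/- (Key inequality via pivoting.) Let n ≥ 1 and m ≥ 2, and suppose μ(n+m,m) < μ(n+m,m−1). Then μ(n+m,m) ≥ μ(n,m) + ⌈m/2⌉, where μ(k,m) is the minimum over n×n matrices W over 𝔽₂ with all diagonal entries 1 and column Hamming weights at most m, of max_{x} |W·x|. -/

import Mathlib

/-- `μ(n,m)`: minimum over matrices with unit diagonal and column weights `≤ m`
of `max_x |W·x|`. -/
noncomputable def mu (n m : ℕ) : ℕ :=
  sInf {k : ℕ | ∃ W : Matrix (Fin n) (Fin n) (ZMod 2),
    (∀ i, W i i = 1) ∧ (∀ j, hammingNorm (fun i => W i j) ≤ m) ∧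
    k = Finset.univ.sup fun x : Fin n → ZMod 2 => hammingNorm (W.mulVec x)}

/-! Take `W` optimal for `μ(n+m, m)`. Since `μ(n+m, m) < μ(n+m, m-1)`, some column `c` of `W`
has weight exactly `m`; let `T` be the `n` rows where it vanishes. The principal submatrix
`W[T,T]` lies in `A(n, m)`, so some `y` has `|W[T,T] y| ≥ μ(n, m)`; extend it by zero to `x`.
Then `W x` and `W (x + e_c)` both restrict to `W[T,T] y` on `T` and are complementary on the
`m` rows of the support of column `c`, so one of them has weight at least `μ(n, m) + ⌈m/2⌉`. -/

open Finset Matrix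

variable {ι κ β : Type*} [Fintype ι]

theorem hammingNorm_comp_le_of_injective [Zero β] [DecidableEq β] [Fintype κ] {f : κ → ι}
    (hf : Function.Injective f) (v : ι → β) : hammingNorm (v ∘ f) ≤ hammingNorm v :=
  card_le_card_of_injOn f (fun a ha => by simpa using ha) hf.injOn

theorem hammingNorm_eq_sum [Zero β] [DecidableEq β] (v : ι → β) :
    hammingNorm v = ∑ i, if v i ≠ 0 then 1 else 0 :=
  card_filter _ _

theorem card_subtype_eq_zero_add_hammingNorm [Zero β] [DecidableEq β] (v : ι → β) :
    Fintype.card {i // v i = 0} + hammingNorm v = Fintype.card ι := by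
  rw [Fintype.card_subtype, hammingNorm, ← card_univ]
  exact card_filter_add_card_filter_not _

theorem hammingNorm_add_hammingNorm_add_eq (u v : ι → ZMod 2) :
    hammingNorm u + hammingNorm (u + v)
      = 2 * hammingNorm (u ∘ (Subtype.val : {i // v i = 0} → ι)) + hammingNorm v := by
  have pointwise : ∀ a b : ZMod 2, ((if a ≠ 0 then 1 else 0) + if a + b ≠ 0 then 1 else 0)
      = 2 * (if b = 0 then (if a ≠ 0 then 1 else 0) else 0) + if b ≠ 0 then 1 else 0 := by
    decide
  have restrict : hammingNorm (u ∘ (Subtype.val : {i // v i = 0} → ι))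
      = ∑ i, if v i = 0 then (if u i ≠ 0 then 1 else 0) else 0 := by
    rw [← sum_filter, sum_subtype _ (p := fun i => v i = 0) (by simp), hammingNorm_eq_sum]
    rfl
  rw [restrict, hammingNorm_eq_sum, hammingNorm_eq_sum, hammingNorm_eq_sum, ← sum_add_distrib,
    mul_sum, ← sum_add_distrib]
  exact sum_congr rfl fun i _ => pointwise (u i) (v i)

theorem submatrix_mulVec_extend {R μ ν : Type*} [NonUnitalNonAssocSemiring R] [Fintype κ]
    (W : Matrix μ ι R) (g : ν → μ) {f : κ → ι} (hf : Function.Injective f) (y : κ → R) :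
    W.submatrix g f *ᵥ y = (W *ᵥ f.extend y 0) ∘ g := by
  ext i
  exact Fintype.sum_of_injective f hf _ _
    (fun j hj => by rw [Function.extend_apply' _ _ _ (by simpa using hj), Pi.zero_apply, mul_zero])
    (fun j => by simp [hf.extend_apply])

def maxMulVecWeight [DecidableEq ι] (W : Matrix ι ι (ZMod 2)) : ℕ :=
  univ.sup fun x : ι → ZMod 2 => hammingNorm (W *ᵥ x)

theorem hammingNorm_mulVec_le_maxMulVecWeight [DecidableEq ι] (W : Matrix ι ι (ZMod 2))
    (x : ι → ZMod 2) :
    hammingNorm (W *ᵥ x) ≤ maxMulVecWeight W :=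
  le_sup (f := fun x => hammingNorm (W *ᵥ x)) (mem_univ x)

theorem maxMulVecWeight_submatrix_add_le [DecidableEq ι] (W : Matrix ι ι (ZMod 2)) (c : ι) :
    maxMulVecWeight (W.submatrix (Subtype.val : {i // W i c = 0} → ι) Subtype.val)
      + (hammingNorm (fun i => W i c) + 1) / 2 ≤ maxMulVecWeight W := by
  set W' := W.submatrix (Subtype.val : {i // W i c = 0} → ι) Subtype.val
  obtain ⟨y, -, hy⟩ := exists_mem_eq_sup univ univ_nonempty fun y => hammingNorm (W' *ᵥ y)
  rw [maxMulVecWeight, hy, submatrix_mulVec_extend W _ Subtype.val_injective]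
  set x := Subtype.val.extend y 0
  have hsplit := hammingNorm_add_hammingNorm_add_eq (W *ᵥ x) (fun i => W i c)
  have hsum : W *ᵥ x + (fun i => W i c) = W *ᵥ (x + Pi.single c 1) := by
    rw [mulVec_add, mulVec_single_one]; rfl
  rw [hsum] at hsplit
  have hx := hammingNorm_mulVec_le_maxMulVecWeight W x
  have hx' := hammingNorm_mulVec_le_maxMulVecWeight W (x + Pi.single c 1)
  omega

theorem mu_le_maxMulVecWeight [DecidableEq ι] {k m : ℕ} (hk : Fintype.card ι = k)
    (W : Matrix ι ι (ZMod 2)) (hd : ∀ i, W i i = 1)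
    (hc : ∀ j, hammingNorm (fun i => W i j) ≤ m) : mu k m ≤ maxMulVecWeight W := by
  let e := (Fintype.equivFinOfCardEq hk).symm
  calc mu k m ≤ maxMulVecWeight (W.submatrix e e) :=
        Nat.sInf_le ⟨_, fun i => hd (e i), fun j =>
          (hammingNorm_comp_le_of_injective e.injective fun i => W i (e j)).trans (hc _), rfl⟩
    _ ≤ maxMulVecWeight W := Finset.sup_le fun x _ => by
        rw [submatrix_mulVec_equiv]
        exact (hammingNorm_comp_le_of_injective e.injective _).trans
          (hammingNorm_mulVec_le_maxMulVecWeight W _)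

theorem exists_maxMulVecWeight_eq_mu (k : ℕ) {m : ℕ} (hm : m ≠ 0) :
    ∃ W : Matrix (Fin k) (Fin k) (ZMod 2), (∀ i, W i i = 1) ∧
      (∀ j, hammingNorm (fun i => W i j) ≤ m) ∧ maxMulVecWeight W = mu k m := by
  have hcol : ∀ j, hammingNorm (fun i => (1 : Matrix (Fin k) (Fin k) (ZMod 2)) i j) ≤ m :=
    fun j => (card_le_one.2 fun a ha b hb => by simp_all [one_apply]).trans
      (Nat.one_le_iff_ne_zero.2 hm)
  obtain ⟨W, hd, hc, hW⟩ : mu k m ∈ _ :=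
    Nat.sInf_mem ⟨_, 1, fun i => one_apply_eq i, hcol, rfl⟩
  exact ⟨W, hd, hc, hW.symm⟩

theorem mu_pivot_ineq_general (n m : ℕ)
    (h : mu (n + m) m < mu (n + m) (m - 1)) :
    mu n m + (m + 1) / 2 ≤ mu (n + m) m := by
  have hm : m ≠ 0 := by rintro rfl; exact lt_irrefl _ h
  obtain ⟨W, hd, hcol, hW⟩ := exists_maxMulVecWeight_eq_mu (n + m) hm
  obtain ⟨c, hc⟩ : ∃ c, hammingNorm (fun i => W i c) = m := by
    by_contra! hne
    refine h.not_ge (hW ▸ mu_le_maxMulVecWeight (Fintype.card_fin _) W hd fun j => ?_)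
    exact Nat.le_sub_one_of_lt ((hcol j).lt_of_ne (hne j))
  have hcard : Fintype.card {i // W i c = 0} = n := by
    have := card_subtype_eq_zero_add_hammingNorm fun i => W i c
    rw [hc, Fintype.card_fin] at this
    omega
  calc mu n m + (m + 1) / 2
      ≤ maxMulVecWeight (W.submatrix (Subtype.val : {i // W i c = 0} → _) Subtype.val)
        + (hammingNorm (fun i => W i c) + 1) / 2 := by
        rw [hc]
        gcongr
        exact mu_le_maxMulVecWeight hcard _ (fun i => hd i)
          fun j => (hammingNorm_comp_le_of_injective Subtype.val_injective _).trans (hcol j)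
    _ ≤ mu (n + m) m := hW ▸ maxMulVecWeight_submatrix_add_le W c

/-- If `μ(n+m,m) < μ(n+m,m−1)`, then `μ(n+m,m) ≥ μ(n,m) + ⌈m/2⌉`. -/
theorem mu_pivot_ineq (n m : ℕ) (hn : 1 ≤ n) (hm : 2 ≤ m)
    (h : mu (n + m) m < mu (n + m) (m - 1)) :
    mu n m + (m + 1) / 2 ≤ mu (n + m) m :=
  mu_pivot_ineq_general n m h
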